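/- arXiv:1609.01929 — 2 statements merged into one kernel-verified Lean document; each statement's English description precedes it below -/
import Mathlib

section
/- Let Â be a closed operator on L_α with domain D(Â) = {G ∈ L_α : M·G ∈ L_α}, where M ≥ 0, and suppose |ÂG| ≤ C(M+1)|G| pointwise controls hold so that dominated convergence applies. Then the set B_bs(Γ₀²) of bounded functions with bounded support is a core for Â: for every G ∈ D(Â), the truncations G_n(η) = G(η)·1{|η| ≤ n, η ⊆ Λ_n} satisfy G_n → G and ÂG_n → ÂG in L_α, where (Λ_n) is an increasing exhausting sequence of compacts. -/
/-!
Pointwise the truncations are eventually equal to `G`, since every configuration is finite and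
the `Λₙ` increase to the whole space. The pointwise control `|ÂF| ≤ K |F|` with
`K = |C| (|M| + 1)` then bounds `|ÂGₙ - ÂG|` by `K |Gₙ - G|`, which is eventually `0` and
dominated by `K |G|`, integrable because `G ∈ D(Â)`. Dominated convergence concludes; as the
truncations need not be measurable, it is applied after replacing non-integrable terms by `0`,
which does not change their integrals.
-/

open MeasureTheory Filter Topology

/-- Truncation of a function on two-component finite configurations to configurations
with at most `n` points, all lying in `Λ`. -/
noncomputable def truncate {d : ℕ}
    (G : Finset (Fin d → ℝ) × Finset (Fin d → ℝ) → ℝ) (n : ℕ) (Λ : Set (Fin d → ℝ)) :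
    Finset (Fin d → ℝ) × Finset (Fin d → ℝ) → ℝ :=
  Set.indicator {η | η.1.card + η.2.card ≤ n ∧ ↑η.1 ⊆ Λ ∧ ↑η.2 ⊆ Λ} G

theorem tendsto_integral_zero_of_dominated {α E : Type*} [MeasurableSpace α]
    [NormedAddCommGroup E] [NormedSpace ℝ E] {μ : Measure α} {F : ℕ → α → E}
    {bound : α → ℝ} (hbound : Integrable bound μ) (hle : ∀ n, ∀ᵐ x ∂μ, ‖F n x‖ ≤ bound x)
    (hlim : ∀ᵐ x ∂μ, Tendsto (fun n => F n x) atTop (𝓝 0)) :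
    Tendsto (fun n => ∫ x, F n x ∂μ) atTop (𝓝 0) := by
  classical
  let F' : ℕ → α → E := fun n => if Integrable (F n) μ then F n else 0
  have hF'_le : ∀ n x, ‖F' n x‖ ≤ ‖F n x‖ := fun n x => by
    by_cases h : Integrable (F n) μ <;> simp [F', h]
  have hintegral : ∀ n, ∫ x, F n x ∂μ = ∫ x, F' n x ∂μ := fun n => by
    by_cases h : Integrable (F n) μ
    · simp [F', h]
    · simp [F', h, integral_undef h]
  have hF'_meas : ∀ n, AEStronglyMeasurable (F' n) μ := fun n => by
    by_cases h : Integrable (F n) μ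
    · simpa [F', h] using h.aestronglyMeasurable
    · simpa [F', h] using aestronglyMeasurable_zero
  simp_rw [hintegral]
  simpa using tendsto_integral_of_dominated_convergence bound hF'_meas hbound
    (fun n => (hle n).mono fun x hx => (hF'_le n x).trans hx)
    (hlim.mono fun x hx =>
      squeeze_zero_norm (hF'_le · x) (tendsto_zero_iff_norm_tendsto_zero.1 hx))

theorem Monotone.eventually_mem_of_iUnion_eq_univ {ι α : Type*} [Preorder ι] {Λ : ι → Set α}
    (hmono : Monotone Λ) (hunion : ⋃ i, Λ i = Set.univ) (x : α) :
    ∀ᶠ i in atTop, x ∈ Λ i := by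
  obtain ⟨i₀, hx⟩ := Set.mem_iUnion.1 (hunion ▸ Set.mem_univ x)
  exact (eventually_ge_atTop i₀).mono fun i hi => hmono hi hx

abbrev Configuration (d : ℕ) : Type := Finset (Fin d → ℝ) × Finset (Fin d → ℝ)

section Truncation

variable {d : ℕ} {G : Configuration d → ℝ}

theorem abs_truncate_sub_le (n : ℕ) (Λ : Set (Fin d → ℝ)) (η) :
    |truncate G n Λ η - G η| ≤ |G η| := by
  classical
  unfold truncate
  rw [Set.indicator_apply]
  split_ifs <;> simp

theorem eventually_truncate_eq {Λ : ℕ → Set (Fin d → ℝ)} (hmono : Monotone Λ)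
    (hunion : ⋃ n, Λ n = Set.univ) (η) :
    ∀ᶠ n in atTop, truncate G n (Λ n) η = G η := by
  have hcover := hmono.eventually_mem_of_iUnion_eq_univ hunion
  filter_upwards [eventually_ge_atTop (η.1.card + η.2.card),
    (eventually_all_finset η.1).2 fun x _ => hcover x,
    (eventually_all_finset η.2).2 fun x _ => hcover x] with n hcard h₁ h₂
  refine Set.indicator_of_mem ?_ G
  exact ⟨hcard, h₁, h₂⟩

theorem tendsto_abs_truncate_sub {Λ : ℕ → Set (Fin d → ℝ)} (hmono : Monotone Λ)
    (hunion : ⋃ n, Λ n = Set.univ) (η) :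
    Tendsto (fun n => |truncate G n (Λ n) η - G η|) atTop (𝓝 0) :=
  tendsto_const_nhds.congr' <| (eventually_truncate_eq (G := G) hmono hunion η).mono
    fun n hn => by simp [hn]

theorem tendsto_integral_abs_map_truncate_sub [MeasurableSpace (Configuration d)]
    {μ : Measure (Configuration d)} (L : (Configuration d → ℝ) →ₗ[ℝ] (Configuration d → ℝ))
    (K : Configuration d → ℝ) (hL : ∀ f η, |L f η| ≤ K η * |f η|)
    (hKG : Integrable (fun η => K η * |G η|) μ) {Λ : ℕ → Set (Fin d → ℝ)}
    (hmono : Monotone Λ) (hunion : ⋃ n, Λ n = Set.univ) :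
    Tendsto (fun n => ∫ η, |L (truncate G n (Λ n)) η - L G η| ∂μ) atTop (𝓝 0) := by
  classical
  have hK_nonneg : ∀ η, 0 ≤ K η := fun η => by
    simpa using (abs_nonneg _).trans (hL (Pi.single η 1) η)
  have hsub : ∀ n η, |L (truncate G n (Λ n)) η - L G η| ≤ K η * |truncate G n (Λ n) η - G η| :=
    fun n η => by simpa [map_sub] using hL (truncate G n (Λ n) - G) η
  refine tendsto_integral_zero_of_dominated hKG (fun n => ae_of_all _ fun η => ?_)
    (ae_of_all _ fun η => ?_)
  · rw [Real.norm_eq_abs, abs_abs]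
    exact (hsub n η).trans (mul_le_mul_of_nonneg_left (abs_truncate_sub_le n _ η) (hK_nonneg η))
  · have hbound := (tendsto_abs_truncate_sub (G := G) hmono hunion η).const_mul (K η)
    rw [mul_zero] at hbound
    exact squeeze_zero (fun n => abs_nonneg _) (hsub · η) hbound

end Truncation

theorem truncations_form_core_general {d : ℕ}
    [MeasurableSpace (Finset (Fin d → ℝ) × Finset (Fin d → ℝ))]
    (μ : Measure (Finset (Fin d → ℝ) × Finset (Fin d → ℝ)))
    (M : Finset (Fin d → ℝ) × Finset (Fin d → ℝ) → ℝ)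
    (LHat : (Finset (Fin d → ℝ) × Finset (Fin d → ℝ) → ℝ) →ₗ[ℝ]
      (Finset (Fin d → ℝ) × Finset (Fin d → ℝ) → ℝ))
    (C : ℝ)
    (hdom : ∀ G η, |LHat G η| ≤ C * (M η + 1) * |G η|)
    (Λ : ℕ → Set (Fin d → ℝ)) (hΛmono : Monotone Λ)
    (hΛunion : (⋃ n, Λ n) = Set.univ)
    (G : Finset (Fin d → ℝ) × Finset (Fin d → ℝ) → ℝ)
    (hG : Integrable G μ) (hMG : Integrable (fun η => M η * G η) μ) :
    Tendsto (fun n => ∫ η, |truncate G n (Λ n) η - G η| ∂μ) atTop (nhds 0) ∧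
    Tendsto (fun n => ∫ η, |LHat (truncate G n (Λ n)) η - LHat G η| ∂μ) atTop (nhds 0) := by
  have hcoeff : ∀ η, C * (M η + 1) ≤ |C| * (|M η| + 1) := fun η => calc
      C * (M η + 1) ≤ |C| * |M η + 1| := by rw [← abs_mul]; exact le_abs_self _
      _ ≤ |C| * (|M η| + 1) := by gcongr; simpa using abs_add_le (M η) 1
  have hK : ∀ f η, |LHat f η| ≤ |C| * (|M η| + 1) * |f η| := fun f η =>
    (hdom f η).trans (mul_le_mul_of_nonneg_right (hcoeff η) (abs_nonneg _))
  have hKG : Integrable (fun η => |C| * (|M η| + 1) * |G η|) μ :=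
    ((hMG.abs.add hG.abs).const_mul |C|).congr <| ae_of_all _ fun η => by
      simp only [Pi.add_apply, abs_mul]; ring
  exact ⟨tendsto_integral_abs_map_truncate_sub LinearMap.id 1 (by simp) (by simpa using hG.abs)
      hΛmono hΛunion,
    tendsto_integral_abs_map_truncate_sub LHat _ hK hKG hΛmono hΛunion⟩

/-- Bounded functions of bounded support form a core: if
`|ÂG| ≤ C(M+1)|G|` pointwise, `G` and `M·G` are integrable (i.e. `G ∈ D(Â)`), and
`(Λₙ)` is an increasing exhausting sequence of compacts, then the truncations
`Gₙ = G·1{|η| ≤ n, η ⊆ Λₙ}` satisfy `Gₙ → G` and `ÂGₙ → ÂG` in the weighted `L¹`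
space (weight folded into `μ`). -/
theorem truncations_form_core {d : ℕ}
    [MeasurableSpace (Finset (Fin d → ℝ) × Finset (Fin d → ℝ))]
    (μ : Measure (Finset (Fin d → ℝ) × Finset (Fin d → ℝ)))
    (M : Finset (Fin d → ℝ) × Finset (Fin d → ℝ) → ℝ) (hM0 : ∀ η, 0 ≤ M η)
    (LHat : (Finset (Fin d → ℝ) × Finset (Fin d → ℝ) → ℝ) →ₗ[ℝ]
      (Finset (Fin d → ℝ) × Finset (Fin d → ℝ) → ℝ))
    (C : ℝ) (hC : 0 ≤ C)
    (hdom : ∀ G η, |LHat G η| ≤ C * (M η + 1) * |G η|)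
    (Λ : ℕ → Set (Fin d → ℝ)) (hΛmono : Monotone Λ)
    (hΛcompact : ∀ n, IsCompact (Λ n)) (hΛunion : (⋃ n, Λ n) = Set.univ)
    (G : Finset (Fin d → ℝ) × Finset (Fin d → ℝ) → ℝ)
    (hG : Integrable G μ) (hMG : Integrable (fun η => M η * G η) μ) :
    Tendsto (fun n => ∫ η, |truncate G n (Λ n) η - G η| ∂μ) atTop (nhds 0) ∧
    Tendsto (fun n => ∫ η, |LHat (truncate G n (Λ n)) η - LHat G η| ∂μ) atTop (nhds 0) :=
  truncations_form_core_general μ M LHat C hdom Λ hΛmono hΛunion G hG hMG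
end

section
/- Let T̂(t) be a contraction semigroup on L_α with decomposition T̂(t) = 𝟙* + 𝟙*T̂(t)(1−𝟙*) + T̃(t)(1−𝟙*) where T̃(t) = (1−𝟙*)T̂(t)|_{L_α^{≥1}} satisfies ‖T̃(t)G‖ ≤ C e^{−(λ₀−ε)t}‖G‖ for G with G(∅)=0. Let P̂* be a projection on the dual space K_α with T̂(t)*P̂* = P̂*T̂(t)* = P̂* and k − P̂*k ∈ K_α^{≥1} for all k. Then for every k ∈ K_α and t ≥ 0, ‖T̂(t)*k − P̂*k‖_{K_α} ≤ C e^{−(λ₀−ε)t} ‖k − P̂*k‖_{K_α}; i.e. the adjoint semigroup is uniformly exponentially ergodic. -/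
/-!
Write `m = k − P̂*k`. Invariance `(P̂*k) ∘ T̂(t) = P̂*k` gives `T̂(t)*k − P̂*k = m ∘ T̂(t)`, and since
`m` vanishes on the range of `𝟙*`, the decomposition of `T̂(t)` leaves only `m ∘ T̃(t)(1 − 𝟙*)`.
Its norm is at most `‖m‖` times that of `T̃(t)(1 − 𝟙*)`, which the decay estimate and
`‖1 − 𝟙*‖ ≤ 1` bound by `C e^{−(λ₀−ε)t}`.
-/

namespace ContinuousLinearMap

variable {E F : Type*}

theorem comp_add_comp_add_eq_of_comp_eq_zero {R : Type*} [Semiring R] [AddCommMonoid E] [Module R E]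
    [TopologicalSpace E] [ContinuousAdd E] [AddCommMonoid F] [Module R F] [TopologicalSpace F]
    [ContinuousAdd F]
    {m : E →L[R] F} {P : E →L[R] E} (hm : m.comp P = 0) (A B : E →L[R] E) :
    m.comp (P + P.comp A + B) = m.comp B := by
  simp only [comp_add, ← comp_assoc, hm, zero_comp, zero_add]

theorem opNorm_le_of_norm_apply_le_mul_norm {𝕜 G : Type*} [NontriviallyNormedField 𝕜]
    [SeminormedAddCommGroup E] [NormedSpace 𝕜 E] [SeminormedAddCommGroup F] [NormedSpace 𝕜 F]
    [SeminormedAddCommGroup G] [NormedSpace 𝕜 G]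
    {B : E →L[𝕜] F} {Q : E →L[𝕜] G} (hQ : ‖Q‖ ≤ 1) {c : ℝ} (hc : 0 ≤ c)
    (hB : ∀ x, ‖B x‖ ≤ c * ‖Q x‖) : ‖B‖ ≤ c :=
  opNorm_le_bound _ hc fun x =>
    calc ‖B x‖ ≤ c * ‖Q x‖ := hB x
      _ ≤ c * ‖x‖ := mul_le_mul_of_nonneg_left (Q.le_of_opNorm_le hQ x |>.trans_eq (one_mul _)) hc

end ContinuousLinearMap

open ContinuousLinearMap in
theorem adjoint_semigroup_uniformly_ergodic_general
    {X : Type*} [NormedAddCommGroup X] [NormedSpace ℝ X]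
    (T : ℝ → X →L[ℝ] X) (P0 Q : X →L[ℝ] X)
    (C lam0 eps : ℝ) (hC : 0 < C) (hQnorm : ‖Q‖ ≤ 1)
    (hdec : ∀ t : ℝ, 0 ≤ t →
      T t = P0 + P0.comp ((T t).comp Q) + Q.comp ((T t).comp Q))
    (hdecay : ∀ t : ℝ, 0 ≤ t → ∀ G : X,
      ‖Q (T t (Q G))‖ ≤ C * Real.exp (-(lam0 - eps) * t) * ‖Q G‖)
    (Pstar : StrongDual ℝ X →L[ℝ] StrongDual ℝ X)
    (hPstar_inv : ∀ t : ℝ, 0 ≤ t → ∀ k : StrongDual ℝ X,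
      (Pstar k).comp (T t) = Pstar k ∧ Pstar (k.comp (T t)) = Pstar k)
    (hker : ∀ k : StrongDual ℝ X, (k - Pstar k).comp P0 = 0) :
    ∀ k : StrongDual ℝ X, ∀ t : ℝ, 0 ≤ t →
      ‖k.comp (T t) - Pstar k‖ ≤ C * Real.exp (-(lam0 - eps) * t) * ‖k - Pstar k‖ := by
  intro k t ht
  have hreduce : k.comp (T t) - Pstar k = (k - Pstar k).comp (Q.comp ((T t).comp Q)) := by
    rw [← (comp_add_comp_add_eq_of_comp_eq_zero (hker k) _ _), ← hdec t ht, sub_comp,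
      (hPstar_inv t ht k).1]
  have hdecay_norm : ‖Q.comp ((T t).comp Q)‖ ≤ C * Real.exp (-(lam0 - eps) * t) :=
    opNorm_le_of_norm_apply_le_mul_norm hQnorm (by positivity) (hdecay t ht)
  calc ‖k.comp (T t) - Pstar k‖
      ≤ ‖k - Pstar k‖ * ‖Q.comp ((T t).comp Q)‖ := hreduce ▸ opNorm_comp_le _ _
    _ ≤ ‖k - Pstar k‖ * (C * Real.exp (-(lam0 - eps) * t)) :=
        mul_le_mul_of_nonneg_left hdecay_norm (norm_nonneg _)
    _ = C * Real.exp (-(lam0 - eps) * t) * ‖k - Pstar k‖ := mul_comm _ _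

/-- Uniform exponential ergodicity of the adjoint semigroup.
`T` is a contraction semigroup on `L_α` with decomposition
`T̂(t) = 𝟙* + 𝟙*T̂(t)(1−𝟙*) + T̃(t)(1−𝟙*)` (here `P0` is multiplication by `𝟙*`,
`Q = 1 − P0`), where `T̃(t) = Q T̂(t) Q` decays exponentially.  `P̂*` is a projection
on the dual with `T̂(t)*P̂* = P̂*T̂(t)* = P̂*` and `k − P̂*k ∈ K_α^{≥1}` (i.e. it
annihilates the range of `P0`).  Then
`‖T̂(t)*k − P̂*k‖ ≤ C e^{−(λ₀−ε)t}‖k − P̂*k‖` for all `k` and `t ≥ 0`. -/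
theorem adjoint_semigroup_uniformly_ergodic
    {X : Type*} [NormedAddCommGroup X] [NormedSpace ℝ X]
    (T : ℝ → X →L[ℝ] X) (P0 Q : X →L[ℝ] X)
    (C lam0 eps : ℝ) (hC : 0 < C) (heps : 0 < eps) (hle : eps < lam0)
    (hPQ : P0 + Q = ContinuousLinearMap.id ℝ X)
    (hP0idem : P0.comp P0 = P0) (hQidem : Q.comp Q = Q) (hQnorm : ‖Q‖ ≤ 1)
    (hTcontr : ∀ t : ℝ, 0 ≤ t → ‖T t‖ ≤ 1)
    (hdec : ∀ t : ℝ, 0 ≤ t →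
      T t = P0 + P0.comp ((T t).comp Q) + Q.comp ((T t).comp Q))
    (hdecay : ∀ t : ℝ, 0 ≤ t → ∀ G : X,
      ‖Q (T t (Q G))‖ ≤ C * Real.exp (-(lam0 - eps) * t) * ‖Q G‖)
    (Pstar : StrongDual ℝ X →L[ℝ] StrongDual ℝ X)
    (hPstar_idem : Pstar.comp Pstar = Pstar)
    (hPstar_inv : ∀ t : ℝ, 0 ≤ t → ∀ k : StrongDual ℝ X,
      (Pstar k).comp (T t) = Pstar k ∧ Pstar (k.comp (T t)) = Pstar k)
    (hker : ∀ k : StrongDual ℝ X, (k - Pstar k).comp P0 = 0) :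
    ∀ k : StrongDual ℝ X, ∀ t : ℝ, 0 ≤ t →
      ‖k.comp (T t) - Pstar k‖ ≤ C * Real.exp (-(lam0 - eps) * t) * ‖k - Pstar k‖ :=
  adjoint_semigroup_uniformly_ergodic_general T P0 Q C lam0 eps hC hQnorm hdec hdecay Pstar
    hPstar_inv hker
end
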